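/- For the unification constraint set U(E₁, E₂) on parameterized types: if E₁ and E₂ are two p-types with the same erasure (E₁⁻ = E₂⁻), then U(E₁, E₂) is defined, and for any instantiation φ admissible for both E₁ and E₂, φ(E₁) = φ(E₂) if and only if φ satisfies all (in)equations in U(E₁, E₂). -/
import Mathlib


/-- System F types. -/
inductive FTy where
  | var (α : ℕ)
  | arr (T U : FTy)
  | all (T : FTy)

/-- A linear combination of integer parameters, as a formal sum (list) of parameter names. -/
abbrev Comb := List ℕ

mutual
/-- Parameterized type bodies: F ::= α | D ⊸ A | ∀α.A. -/
inductive PF where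
  | var (α : ℕ)
  | arr (D : PBang) (A : PLin)
  | all (A : PLin)
/-- Linear p-types: A ::= §^c F. -/
inductive PLin where
  | mk (c : Comb) (F : PF)
/-- Bang p-types: D ::= §^{b,c} F (b a boolean parameter). -/
inductive PBang where
  | mk (b : ℕ) (c : Comb) (F : PF)
end

mutual
def eraseF : PF → FTy
  | .var α => .var α
  | .arr D A => .arr (eraseB D) (eraseL A)
  | .all A => .all (eraseL A)
def eraseL : PLin → FTy
  | .mk _ F => eraseF F
def eraseB : PBang → FTy
  | .mk _ _ F => eraseF F
end

/-- (In)equations between parameters produced by unification. -/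
inductive PEq where
  | ceq (c₁ c₂ : Comb)   -- c₁ = c₂
  | beq (b₁ b₂ : ℕ)      -- b₁ = b₂

mutual
/-- Unification constraints U(F₁,F₂). -/
def UF : PF → PF → Option (List PEq)
  | .var α, .var β => if α = β then some [] else none
  | .arr D₁ A₁, .arr D₂ A₂ => do pure ((← UB D₁ D₂) ++ (← UL A₁ A₂))
  | .all A₁, .all A₂ => UL A₁ A₂
  | _, _ => none
/-- Unification constraints U(A₁,A₂) for linear p-types. -/
def UL : PLin → PLin → Option (List PEq)
  | .mk c₁ F₁, .mk c₂ F₂ => do pure (.ceq c₁ c₂ :: (← UF F₁ F₂))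
/-- Unification constraints U(D₁,D₂) for bang p-types. -/
def UB : PBang → PBang → Option (List PEq)
  | .mk b₁ c₁ F₁, .mk b₂ c₂ F₂ => do pure (.beq b₁ b₂ :: .ceq c₁ c₂ :: (← UF F₁ F₂))
end

/-- An instantiation: boolean parameters ↦ Bool, integer parameters ↦ ℤ. -/
structure Inst where
  b : ℕ → Bool
  i : ℕ → ℤ

/-- Value of a linear combination under an instantiation. -/
def cval (φ : Inst) (c : Comb) : ℤ := (c.map φ.i).sum

mutual
/-- Admissibility of an instantiation for a p-type body. -/
def AdmF (φ : Inst) : PF → Prop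
  | .var _ => True
  | .arr D A => AdmB φ D ∧ AdmL φ A
  | .all A => AdmL φ A
def AdmL (φ : Inst) : PLin → Prop
  | .mk c F => 0 ≤ cval φ c ∧ AdmF φ F
def AdmB (φ : Inst) : PBang → Prop
  | .mk b c F => 0 ≤ cval φ c ∧ (φ.b b = true → 1 ≤ cval φ c) ∧ AdmF φ F
end

mutual
/-- DLAL* linear types. -/
inductive SLin where
  | var (α : ℕ)
  | arr (D : SBang) (A : SLin)
  | all (A : SLin)
  | para (A : SLin)
/-- DLAL* types: D ::= A | !A. -/
inductive SBang where
  | lin (A : SLin)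
  | bang (A : SLin)
end

/-- §^n A. -/
def paraN : ℕ → SLin → SLin
  | 0, A => A
  | n + 1, A => .para (paraN n A)

mutual
/-- Applying an instantiation to a p-type body. -/
def appF (φ : Inst) : PF → SLin
  | .var α => .var α
  | .arr D A => .arr (appB φ D) (appL φ A)
  | .all A => .all (appL φ A)
/-- Applying an instantiation to a linear p-type: §^c F ↦ §^{φ(c)} φ(F). -/
def appL (φ : Inst) : PLin → SLin
  | .mk c F => paraN (cval φ c).toNat (appF φ F)
/-- Applying an instantiation to a bang p-type: §^{b,c} F ↦ !§^{φ(c)-1} φ(F) if φ(b)=1,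
else §^{φ(c)} φ(F). -/
def appB (φ : Inst) : PBang → SBang
  | .mk b c F =>
    if φ.b b then .bang (paraN ((cval φ c).toNat - 1) (appF φ F))
    else .lin (paraN (cval φ c).toNat (appF φ F))
end

/-- Satisfaction of a unification (in)equation by an instantiation. -/
def SatEq (φ : Inst) : PEq → Prop
  | .ceq c₁ c₂ => cval φ c₁ = cval φ c₂
  | .beq b₁ b₂ => φ.b b₁ = φ.b b₂

lemma appF_notPara (φ : Inst) (F : PF) : ∀ X, appF φ F ≠ .para X := by
  cases F <;> simp [appF]

lemma paraN_inj {A B : SLin} (hA : ∀ X, A ≠ .para X) (hB : ∀ X, B ≠ .para X) :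
    ∀ n m, paraN n A = paraN m B ↔ n = m ∧ A = B := by
  intro n
  induction n with
  | zero =>
    intro m
    cases m with
    | zero => simp [paraN]
    | succ m =>
      simp only [paraN]
      constructor
      · intro h; exact absurd h (hA _)
      · rintro ⟨h, -⟩; omega
  | succ n ih =>
    intro m
    cases m with
    | zero =>
      simp only [paraN]
      constructor
      · intro h; exact absurd h.symm (hB _)
      · rintro ⟨h, -⟩; omega
    | succ m =>
      simp only [paraN, SLin.para.injEq, ih m]
      constructor
      · rintro ⟨h1, h2⟩; exact ⟨by omega, h2⟩
      · rintro ⟨h1, h2⟩; exact ⟨by omega, h2⟩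
      
mutual
theorem mainF : ∀ F₁ F₂ : PF, eraseF F₁ = eraseF F₂ →
    ∃ eqs : List PEq, UF F₁ F₂ = some eqs ∧ ∀ φ : Inst, AdmF φ F₁ → AdmF φ F₂ →
      (appF φ F₁ = appF φ F₂ ↔ ∀ e ∈ eqs, SatEq φ e)
  | .var α, .var β, h => by
      simp only [eraseF, FTy.var.injEq] at h
      subst h
      exact ⟨[], by simp [UF], fun φ _ _ => by simp [appF]⟩
  | .var _, .arr _ _, h => by simp [eraseF] at h
  | .var _, .all _, h => by simp [eraseF] at h
  | .arr _ _, .var _, h => by simp [eraseF] at h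
  | .arr _ _, .all _, h => by simp [eraseF] at h
  | .all _, .var _, h => by simp [eraseF] at h
  | .all _, .arr _ _, h => by simp [eraseF] at h
  | .arr D₁ A₁, .arr D₂ A₂, h => by
      simp only [eraseF, FTy.arr.injEq] at h
      obtain ⟨eqsB, hB, hBiff⟩ := mainB D₁ D₂ h.1
      obtain ⟨eqsL, hL, hLiff⟩ := mainL A₁ A₂ h.2
      refine ⟨eqsB ++ eqsL, by simp [UF, hB, hL], fun φ hφ₁ hφ₂ => ?_⟩
      simp only [AdmF] at hφ₁ hφ₂
      simp only [appF, SLin.arr.injEq]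
      rw [hLiff φ hφ₁.2 hφ₂.2, hBiff φ hφ₁.1 hφ₂.1]
      constructor
      · rintro ⟨h1, h2⟩ e he
        rcases List.mem_append.1 he with h | h
        exacts [h1 e h, h2 e h]
      · intro h
        exact ⟨fun e he => h e (by simp [he]), fun e he => h e (by simp [he])⟩
  | .all A₁, .all A₂, h => by
      simp only [eraseF, FTy.all.injEq] at h
      obtain ⟨eqsL, hL, hLiff⟩ := mainL A₁ A₂ h
      refine ⟨eqsL, by simp [UF, hL], fun φ hφ₁ hφ₂ => ?_⟩
      simp only [AdmF] at hφ₁ hφ₂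
      simp only [appF, SLin.all.injEq]
      exact hLiff φ hφ₁ hφ₂

theorem mainL : ∀ A₁ A₂ : PLin, eraseL A₁ = eraseL A₂ →
    ∃ eqs : List PEq, UL A₁ A₂ = some eqs ∧ ∀ φ : Inst, AdmL φ A₁ → AdmL φ A₂ →
      (appL φ A₁ = appL φ A₂ ↔ ∀ e ∈ eqs, SatEq φ e)
  | .mk c₁ F₁, .mk c₂ F₂, h => by
      simp only [eraseL] at h
      obtain ⟨eqsF, hF, hFiff⟩ := mainF F₁ F₂ h
      refine ⟨.ceq c₁ c₂ :: eqsF, by simp [UL, hF], fun φ hφ₁ hφ₂ => ?_⟩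
      obtain ⟨hc₁, ha₁⟩ := hφ₁
      obtain ⟨hc₂, ha₂⟩ := hφ₂
      simp only [appL]
      rw [paraN_inj (appF_notPara φ F₁) (appF_notPara φ F₂), hFiff φ ha₁ ha₂]
      simp only [List.mem_cons, forall_eq_or_imp, SatEq]
      constructor
      · rintro ⟨h1, h2⟩; exact ⟨by omega, h2⟩
      · rintro ⟨h1, h2⟩; exact ⟨by omega, h2⟩

theorem mainB : ∀ D₁ D₂ : PBang, eraseB D₁ = eraseB D₂ →
    ∃ eqs : List PEq, UB D₁ D₂ = some eqs ∧ ∀ φ : Inst, AdmB φ D₁ → AdmB φ D₂ →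
      (appB φ D₁ = appB φ D₂ ↔ ∀ e ∈ eqs, SatEq φ e)
  | .mk b₁ c₁ F₁, .mk b₂ c₂ F₂, h => by
      simp only [eraseB] at h
      obtain ⟨eqsF, hF, hFiff⟩ := mainF F₁ F₂ h
      refine ⟨.beq b₁ b₂ :: .ceq c₁ c₂ :: eqsF, by simp [UB, hF], fun φ hφ₁ hφ₂ => ?_⟩
      obtain ⟨hc₁, hb₁', ha₁⟩ := hφ₁
      obtain ⟨hc₂, hb₂', ha₂⟩ := hφ₂
      simp only [List.mem_cons, forall_eq_or_imp, SatEq]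
      by_cases hb₁ : φ.b b₁ <;> by_cases hb₂ : φ.b b₂
      · have h1 := hb₁' hb₁
        have h2 := hb₂' hb₂
        simp only [appB, hb₁, hb₂, if_true, SBang.bang.injEq, hb₁, hb₂]
        rw [paraN_inj (appF_notPara φ F₁) (appF_notPara φ F₂), hFiff φ ha₁ ha₂]
        constructor
        · rintro ⟨e1, e2⟩; exact ⟨by trivial, by omega, e2⟩
        · rintro ⟨-, e1, e2⟩; exact ⟨by omega, e2⟩
      · simp only [appB, hb₁, hb₂, if_true, if_false, hb₁, hb₂]
        simp [hb₁, hb₂]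
      · simp only [appB, hb₁, hb₂, if_true, if_false]
        simp [hb₁, hb₂]
      · rw [Bool.not_eq_true] at hb₁ hb₂
        simp only [appB, hb₁, hb₂, Bool.false_eq_true, if_false, SBang.lin.injEq]
        rw [paraN_inj (appF_notPara φ F₁) (appF_notPara φ F₂), hFiff φ ha₁ ha₂]
        constructor
        · rintro ⟨e1, e2⟩; exact ⟨by trivial, by omega, e2⟩
        · rintro ⟨-, e1, e2⟩; exact ⟨by omega, e2⟩
end

/-- If E₁, E₂ are p-types with the same erasure then U(E₁,E₂) is defined, and for any
instantiation φ admissible for both, φ(E₁) = φ(E₂) iff φ satisfies all of U(E₁,E₂). -/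
theorem stmt_15 :
    (∀ A₁ A₂ : PLin, eraseL A₁ = eraseL A₂ →
      ∃ eqs : List PEq, UL A₁ A₂ = some eqs ∧
        ∀ φ : Inst, AdmL φ A₁ → AdmL φ A₂ →
          (appL φ A₁ = appL φ A₂ ↔ ∀ e ∈ eqs, SatEq φ e)) ∧
    (∀ D₁ D₂ : PBang, eraseB D₁ = eraseB D₂ →
      ∃ eqs : List PEq, UB D₁ D₂ = some eqs ∧
        ∀ φ : Inst, AdmB φ D₁ → AdmB φ D₂ →
          (appB φ D₁ = appB φ D₂ ↔ ∀ e ∈ eqs, SatEq φ e)) :=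
  ⟨fun A₁ A₂ h => mainL A₁ A₂ h, fun D₁ D₂ h => mainB D₁ D₂ h⟩
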